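/- arXiv:1405.4627 — 5 statements merged into one kernel-verified Lean document; each statement's English description precedes it below -/
import Mathlib

section
/- Let α: A → B and β: B → C be homomorphisms of commutative rings. (1) If both α and β are Weierstrass, then the composition β ∘ α is Weierstrass. (2) If the composition β ∘ α is Weierstrass, then β is Weierstrass. (3) If moreover β ∘ α is Weierstrass, β is injective, and β maps the unit group B^× onto the unit group C^× (i.e. β(B^×) = C^×), then α is Weierstrass. -/
/-- A ring homomorphism `φ : A → B` between commutative rings is *Weierstrass* if every `b ∈ B`
factors as `b = φ(a) * b'` with `a ∈ A` and `b'` a unit of `B`. -/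
def RingHom.IsWeierstrass {A B : Type*} [CommRing A] [CommRing B] (φ : A →+* B) : Prop :=
  ∀ b : B, ∃ (a : A) (b' : Bˣ), b = φ a * b'

theorem weierstrass_comp {A B C : Type*} [CommRing A] [CommRing B] [CommRing C]
    (α : A →+* B) (β : B →+* C) :
    (α.IsWeierstrass → β.IsWeierstrass → (β.comp α).IsWeierstrass) ∧
    ((β.comp α).IsWeierstrass → β.IsWeierstrass) ∧
    ((β.comp α).IsWeierstrass → Function.Injective β →
      β '' (Set.range ((↑) : Bˣ → B)) = Set.range ((↑) : Cˣ → C) →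
      α.IsWeierstrass) := by
  refine ⟨?_, ?_, ?_⟩
  · intro hα hβ c
    obtain ⟨b, u, hc⟩ := hβ c
    obtain ⟨a, v, hb⟩ := hα b
    refine ⟨a, Units.map (β : B →* C) v * u, ?_⟩
    simp [hc, hb, map_mul, mul_assoc]
  · intro h c
    obtain ⟨a, u, hc⟩ := h c
    exact ⟨α a, u, hc⟩
  · intro h hinj hsurj b
    obtain ⟨a, u, hc⟩ := h (β b)
    have : (u : C) ∈ Set.range ((↑) : Cˣ → C) := ⟨u, rfl⟩
    rw [← hsurj] at this
    obtain ⟨w, ⟨v, rfl⟩, hw⟩ := this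
    refine ⟨a, v, hinj ?_⟩
    rw [map_mul, hc, hw]
    rfl
end

section
/- Let A be a domain and let A ⊆ B be a Weierstrass extension of commutative rings. Let I be an ideal of A such that B is henselian relative to IB and the induced map A/I → B/IB is an isomorphism. Suppose 2 is invertible in B/IB. Then B is a domain and u(K_B) ≤ u(K_A), where K_A and K_B denote the fields of fractions of A and B respectively. -/
universe u

/-- The u-invariant of a field `k`: the supremum (in `ℕ∞`) of the dimensions of anisotropic
quadratic forms over `k`. -/
noncomputable def uInvariant (k : Type*) [Field k] : ℕ∞ :=
  sSup {c : ℕ∞ | ∃ n : ℕ, c = n ∧ ∃ Q : QuadraticForm k (Fin n → k), Q.Anisotropic}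

/-- Theorem 1.5: if `A` is a domain, `A ⊆ B` is a Weierstrass extension, `I` is an ideal of `A`
such that `B` is henselian relative to `IB`, `A/I ≃ B/IB` and `2` is invertible in `B/IB`,
then `B` is a domain and `u(K_B) ≤ u(K_A)` for the fraction fields `K_A`, `K_B`. -/
theorem isDomain_and_uInvariant_le {A B : Type u} [CommRing A] [IsDomain A] [CommRing B]
    (φ : A →+* B) (hφ : Function.Injective φ) (hW : φ.IsWeierstrass) (I : Ideal A)
    [HenselianRing B (I.map φ)]
    (hiso : Function.Bijective (Ideal.quotientMap (I.map φ) φ Ideal.le_comap_map))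
    (h2 : IsUnit (2 : B ⧸ I.map φ))
    (K : Type u) [Field K] [Algebra A K] [IsFractionRing A K] :
    IsDomain B ∧ ∀ (L : Type u) [Field L] [Algebra B L], IsFractionRing B L →
      uInvariant L ≤ uInvariant K := by
  classical
  haveI : Nontrivial B := ⟨⟨φ 0, φ 1, fun h => zero_ne_one (hφ h)⟩⟩
  have hjac : I.map φ ≤ Ideal.jacobson (⊥ : Ideal B) := HenselianRing.jac (I := I.map φ)
  -- units lift along the quotient B → B/IB
  have hlift : ∀ x : B, IsUnit (Ideal.Quotient.mk (I.map φ) x) → IsUnit x := by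
    intro x hx
    obtain ⟨u, hu⟩ := hx
    obtain ⟨y, hy⟩ := Ideal.Quotient.mk_surjective ((u⁻¹ : (B ⧸ I.map φ)ˣ) : B ⧸ I.map φ)
    have hxy : x * y - 1 ∈ I.map φ := by
      have : Ideal.Quotient.mk (I.map φ) (x * y - 1) = 0 := by
        rw [map_sub, map_mul, map_one, ← hu, hy, Units.mul_inv, sub_self]
      exact (Ideal.Quotient.eq_zero_iff_mem).mp this
    exact isUnit_of_mul_isUnit_left
      (Ideal.isUnit_of_sub_one_mem_jacobson_bot (x * y) (hjac hxy))
  have h2B : IsUnit (2 : B) := hlift 2 (by rw [map_ofNat]; exact h2)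
  -- every element of B is φ(a) times the square of a unit
  have hdecomp : ∀ b : B, ∃ (a : A) (s : Bˣ), b = φ a * (s : B) ^ 2 := by
    intro b
    obtain ⟨a₀, u, hb⟩ := hW b
    obtain ⟨q, hq⟩ := hiso.2 (Ideal.Quotient.mk (I.map φ) (u : B))
    obtain ⟨a₁, rfl⟩ := Ideal.Quotient.mk_surjective q
    rw [Ideal.quotientMap_mk] at hq
    have hu1 : IsUnit (φ a₁) := hlift _ (by rw [hq]; exact u.isUnit.map _)
    obtain ⟨w, hw⟩ := hu1
    have hv : (1 : B) - (u : B) * ((w⁻¹ : Bˣ) : B) ∈ I.map φ := by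
      have hmem : φ a₁ - (u : B) ∈ I.map φ := Ideal.Quotient.eq.mp hq
      have h' := Ideal.mul_mem_right ((w⁻¹ : Bˣ) : B) _ hmem
      convert h' using 1
      rw [sub_mul, ← hw, Units.mul_inv]
    have hmonic : (Polynomial.X ^ 2 -
        Polynomial.C ((u : B) * ((w⁻¹ : Bˣ) : B))).Monic :=
      Polynomial.monic_X_pow_sub_C _ two_ne_zero
    have heval : (Polynomial.X ^ 2 -
        Polynomial.C ((u : B) * ((w⁻¹ : Bˣ) : B))).eval 1 ∈ I.map φ := by
      simpa using hv
    have hder : IsUnit (Ideal.Quotient.mk (I.map φ)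
        ((Polynomial.X ^ 2 -
          Polynomial.C ((u : B) * ((w⁻¹ : Bˣ) : B))).derivative.eval 1)) := by
      have hd : (Polynomial.X ^ 2 -
          Polynomial.C ((u : B) * ((w⁻¹ : Bˣ) : B))).derivative.eval 1 = 2 := by
        simp
        norm_num
      rw [hd, map_ofNat]; exact h2
    obtain ⟨s, hs, hs1⟩ := HenselianRing.is_henselian _ hmonic 1 heval hder
    have hsv : s ^ 2 = (u : B) * ((w⁻¹ : Bˣ) : B) := by
      have h0 : s ^ 2 - (u : B) * ((w⁻¹ : Bˣ) : B) = 0 := by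
        simpa [Polynomial.IsRoot] using hs
      exact sub_eq_zero.mp h0
    obtain ⟨su, hsu⟩ := Ideal.isUnit_of_sub_one_mem_jacobson_bot s (hjac hs1)
    refine ⟨a₀ * a₁, su, ?_⟩
    have hu' : (u : B) = φ a₁ * s ^ 2 := by
      rw [hsv, ← hw, mul_comm ((w : B)) _, Units.inv_mul_cancel_right]
    rw [hb, hu', map_mul, hsu]; ring
  -- B is a domain
  haveI : NoZeroDivisors B := by
    constructor
    intro a b hab
    obtain ⟨x, ux, hx⟩ := hW a
    obtain ⟨y, uy, hy⟩ := hW b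
    have h0 : φ (x * y) * ((ux : B) * (uy : B)) = 0 := by
      rw [map_mul]; rw [hx, hy] at hab; linear_combination hab
    have h1 : φ (x * y) = 0 := by
      have := (Units.mul_left_eq_zero (u := ux * uy) (a := φ (x * y)))
      simpa using this.mp (by simpa using h0)
    have h2' : x * y = 0 := hφ (by rw [h1, map_zero])
    rcases mul_eq_zero.mp h2' with h | h
    · left; rw [hx, h, map_zero, zero_mul]
    · right; rw [hy, h, map_zero, zero_mul]
  haveI hBdom : IsDomain B := NoZeroDivisors.to_isDomain B
  refine ⟨hBdom, ?_⟩
  intro L _ _ hFR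
  haveI := hFR
  have hBLinj : Function.Injective (algebraMap B L) := IsFractionRing.injective B L
  have h2L : (2 : L) ≠ 0 := by
    have h := h2B.map (algebraMap B L)
    rw [map_ofNat] at h
    exact h.ne_zero
  haveI : Invertible (2 : L) := invertibleOfNonzero h2L
  -- every element of L is (image of φ(c)) times a nonzero square
  have hLdecomp : ∀ l : L, ∃ (c : A) (t : L), t ≠ 0 ∧ l = algebraMap B L (φ c) * t ^ 2 := by
    intro l
    obtain ⟨b1, b2, hb2, hl⟩ := IsFractionRing.div_surjective (A := B) l
    obtain ⟨c, s, hcs⟩ := hdecomp (b1 * b2)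
    have hb2ne : algebraMap B L b2 ≠ 0 :=
      IsFractionRing.to_map_ne_zero_of_mem_nonZeroDivisors hb2
    have hsne : algebraMap B L (s : B) ≠ 0 := ((s.isUnit).map (algebraMap B L)).ne_zero
    refine ⟨c, algebraMap B L (s : B) / algebraMap B L b2, div_ne_zero hsne hb2ne, ?_⟩
    have key : algebraMap B L b1 * algebraMap B L b2 =
        algebraMap B L (φ c) * (algebraMap B L (s : B)) ^ 2 := by
      rw [← map_mul, hcs, map_mul, map_pow]
    rw [← hl]
    field_simp
    linear_combination key
  -- the inclusion of the defining sets
  refine sSup_le_sSup ?_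
  rintro c ⟨n, rfl, Q, hQ⟩
  obtain ⟨w, ⟨e⟩⟩ := Q.equivalent_weightedSumSquares
  have hwan : (QuadraticMap.weightedSumSquares L w).Anisotropic := by
    intro x hx
    have hm : Q (e.toLinearEquiv.symm x) = 0 := by
      have happ := e.map_app (e.toLinearEquiv.symm x)
      have hx' : (e (e.toLinearEquiv.symm x) : Fin _ → L) = x :=
        e.toLinearEquiv.apply_symm_apply x
      rw [hx'] at happ
      rw [← happ, hx]
    have h0 := hQ _ hm
    calc x = e.toLinearEquiv (e.toLinearEquiv.symm x) :=
          (e.toLinearEquiv.apply_symm_apply x).symm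
      _ = 0 := by rw [h0, map_zero]
  have hrank : Module.finrank L (Fin n → L) = n := Module.finrank_fin_fun L
  choose cc tt htne hwt using fun i : Fin n => hLdecomp (w (Fin.cast hrank.symm i))
  refine ⟨n, rfl, QuadraticMap.weightedSumSquares K (fun i => algebraMap A K (cc i)), ?_⟩
  intro x hx
  rw [QuadraticMap.weightedSumSquares_apply] at hx
  simp only [smul_eq_mul] at hx
  obtain ⟨d, hd⟩ := IsLocalization.exist_integer_multiples (nonZeroDivisors A) Finset.univ x
  have hy' : ∀ i : Fin n, ∃ a : A, algebraMap A K a = (d : A) • x i := fun i =>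
    hd i (Finset.mem_univ i)
  choose y hy using hy'
  have hsumA : ∑ i, cc i * (y i * y i) = 0 := by
    apply IsFractionRing.injective A K
    rw [map_sum, map_zero]
    calc ∑ i, algebraMap A K (cc i * (y i * y i))
        = ∑ i, algebraMap A K (cc i) * (algebraMap A K (y i) * algebraMap A K (y i)) := by
          simp only [map_mul]
      _ = algebraMap A K (d : A) * algebraMap A K (d : A) *
            ∑ i, algebraMap A K (cc i) * (x i * x i) := by
          rw [Finset.mul_sum]
          refine Finset.sum_congr rfl fun i _ => ?_
          rw [hy i, Algebra.smul_def]
          ring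
      _ = 0 := by rw [hx, mul_zero]
  have hsumL : ∑ i, algebraMap B L (φ (cc i)) *
      (algebraMap B L (φ (y i)) * algebraMap B L (φ (y i))) = 0 := by
    have h' := congrArg (algebraMap B L) (congrArg φ hsumA)
    simpa only [map_sum, map_mul, map_zero] using h'
  have hz0 : (fun j : Fin (Module.finrank L (Fin n → L)) =>
      algebraMap B L (φ (y (Fin.cast hrank j))) / tt (Fin.cast hrank j)) = 0 := by
    apply hwan
    rw [QuadraticMap.weightedSumSquares_apply]
    simp only [smul_eq_mul]
    rw [← hsumL]
    refine Fintype.sum_equiv (finCongr hrank) _ _ fun j => ?_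
    have hwj : w j = algebraMap B L (φ (cc (Fin.cast hrank j))) * tt (Fin.cast hrank j) ^ 2 :=
      hwt (Fin.cast hrank j)
    have ht := htne (Fin.cast hrank j)
    rw [hwj]
    simp only [finCongr_apply]
    field_simp
  funext i
  show x i = 0
  have hzi : algebraMap B L (φ (y i)) / tt i = 0 := congrFun hz0 (Fin.cast hrank.symm i)
  have hyL : algebraMap B L (φ (y i)) = 0 := (div_eq_zero_iff.mp hzi).resolve_right (htne i)
  have hy0 : y i = 0 := by
    have h1 : φ (y i) = 0 := hBLinj (by rw [map_zero]; exact hyL)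
    exact hφ (by rw [h1, map_zero])
  have hxi : algebraMap A K (d : A) * x i = 0 := by
    rw [← Algebra.smul_def, ← hy i, hy0, map_zero]
  exact (mul_eq_zero.mp hxi).resolve_left
    (IsFractionRing.to_map_ne_zero_of_mem_nonZeroDivisors d.2)
end

section
/- Let A be a domain with fraction field K_A and let A ⊆ B be a Weierstrass extension. Then the compositum K_A·B (the subring of the fraction field K_B of B generated by K_A and B) equals K_B; in particular K_A·B is a field. -/
universe u

/-- If `A` is a domain and `A ⊆ B` is a Weierstrass extension (so that `B` is a domain),
then inside the fraction field `K_B = L` of `B`, the compositum `K_A·B`, i.e. the subring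
generated by the image of the fraction field of `A` together with the image of `B`,
is all of `K_B`; in particular it is a field. -/
theorem compositum_eq_fractionField {B : Type u} [CommRing B] [IsDomain B] (A : Subring B)
    (hW : A.subtype.IsWeierstrass)
    (L : Type u) [Field L] [Algebra B L] [IsFractionRing B L] :
    Subring.closure
        ({x : L | ∃ a s : A, s ≠ 0 ∧
            x = algebraMap B L (a : B) / algebraMap B L (s : B)} ∪
          Set.range (algebraMap B L)) = ⊤ ∧
      ∀ x : L, x ∈ Subring.closure
        ({x : L | ∃ a s : A, s ≠ 0 ∧
            x = algebraMap B L (a : B) / algebraMap B L (s : B)} ∪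
          Set.range (algebraMap B L)) → x ≠ 0 →
        x⁻¹ ∈ Subring.closure
        ({x : L | ∃ a s : A, s ≠ 0 ∧
            x = algebraMap B L (a : B) / algebraMap B L (s : B)} ∪
          Set.range (algebraMap B L)) := by
  set S : Set L := ({x : L | ∃ a s : A, s ≠ 0 ∧
            x = algebraMap B L (a : B) / algebraMap B L (s : B)} ∪
          Set.range (algebraMap B L)) with hS
  have htop : Subring.closure S = ⊤ := by
    rw [eq_top_iff]
    rintro x -
    obtain ⟨b1, b2, hb2, hx⟩ := IsFractionRing.div_surjective (A := B) x
    have hb2ne : b2 ≠ 0 := nonZeroDivisors.ne_zero hb2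
    obtain ⟨a, u, hau⟩ := hW b2
    have hane : (a : B) ≠ 0 := by
      intro h
      apply hb2ne
      simp [hau, h]
    have haA : a ≠ 0 := fun h => hane (by rw [h]; rfl)
    have key : x = algebraMap B L (b1 * ↑u⁻¹) *
        (algebraMap B L ((1 : A) : B) / algebraMap B L (a : B)) := by
      rw [← hx, hau]
      have hu : algebraMap B L (u : B) ≠ 0 := by
        simp only [ne_eq, IsFractionRing.to_map_eq_zero_iff]; exact u.ne_zero
      have ha : algebraMap B L (a : B) ≠ 0 := by
        simpa using (IsFractionRing.to_map_eq_zero_iff (K := L)).not.2 hane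
      field_simp
      rw [← map_mul, ← map_mul, ← map_mul]
      congr 1
      have h1 : ((u : B)) * ((u⁻¹ : Bˣ) : B) = 1 := u.mul_inv
      change b1 * (a : B) = (a : B) * (u : B) * (b1 * ((u⁻¹ : Bˣ) : B)) * 1
      linear_combination (-((a : B) * b1)) * h1
    rw [key]
    refine mul_mem ?_ ?_
    · exact Subring.subset_closure (Or.inr ⟨_, rfl⟩)
    · exact Subring.subset_closure (Or.inl ⟨1, a, haA, rfl⟩)
  refine ⟨htop, fun x _ hx0 => ?_⟩
  rw [htop]
  trivial
end

section
/- Let φ: A → B be a homomorphism of commutative rings where B has a unique maximal ideal (B is local). Then the following are equivalent: (a) φ is Weierstrass; (b) every ideal I of B satisfies I = φ(φ⁻¹(I))·B, i.e. I is generated by elements in the image of φ; (c) every principal ideal of B is generated by elements in the image of φ. -/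
/-- Lemma 2.1: for `φ : A → B` with `B` local, the following are equivalent:
(a) `φ` is Weierstrass;
(b) every ideal of `B` has a set of generators in the image of `φ`, i.e. `I = φ(φ⁻¹(I))·B`;
(c) every principal ideal of `B` has a set of generators in the image of `φ`. -/
theorem isWeierstrass_tfae {A B : Type*} [CommRing A] [CommRing B] [IsLocalRing B]
    (φ : A →+* B) :
    List.TFAE [φ.IsWeierstrass,
      ∀ I : Ideal B, I = (I.comap φ).map φ,
      ∀ b : B, Ideal.span {b} = ((Ideal.span {b}).comap φ).map φ] := by
  tfae_have 1 → 2 := by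
    intro h I
    apply le_antisymm
    · intro b hb
      obtain ⟨a, u, rfl⟩ := h b
      have ha : φ a ∈ I := by
        have : φ a = (φ a * u) * ↑u⁻¹ := by
          rw [mul_assoc, Units.mul_inv, mul_one]
        rw [this]
        exact I.mul_mem_right _ hb
      exact Ideal.mul_mem_right _ _ (Ideal.mem_map_of_mem φ ha)
    · exact Ideal.map_comap_le
  tfae_have 2 → 3 := fun h b => h _
  tfae_have 3 → 1 := by
    intro h b
    by_cases hb0 : b = 0
    · exact ⟨0, 1, by simp [hb0]⟩
    have hb : b ∈ ((Ideal.span {b}).comap φ).map φ :=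
      (h b) ▸ Ideal.mem_span_singleton_self b
    rw [Ideal.map, Ideal.span, Submodule.mem_span_set'] at hb
    obtain ⟨n, f, g, hg⟩ := hb
    -- each g i is φ a_i with φ a_i ∈ span {b}, so φ a_i = b * c i
    choose a ha hmem using fun i => (g i).2
    have hc : ∀ i, ∃ c : B, φ (a i) = b * c := by
      intro i
      have : φ (a i) ∈ Ideal.span {b} := by
        have := ha i; exact this
      exact Ideal.mem_span_singleton'.mp this |>.imp fun c hcc => by
        rw [← hcc]; ring
    choose c hcc using hc
    have hbs : b = (∑ i, f i * c i) * b := by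
      calc b = ∑ i, f i • (g i : B) := hg.symm
        _ = ∑ i, f i * (b * c i) := by
            refine Finset.sum_congr rfl fun i _ => ?_
            rw [smul_eq_mul, ← hmem i, hcc i]
        _ = (∑ i, f i * c i) * b := by rw [Finset.sum_mul]; exact Finset.sum_congr rfl fun i _ => by ring
    set s := ∑ i, f i * c i with hs
    have hsu : IsUnit s := by
      rcases IsLocalRing.isUnit_or_isUnit_one_sub_self s with h' | h'
      · exact h'
      · exfalso
        apply hb0
        have : b * (1 - s) = 0 := by
          rw [mul_sub, mul_one]
          nth_rewrite 1 [hbs]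
          ring
        obtain ⟨v, hv⟩ := h'
        calc b = b * (1 - s) * ↑v⁻¹ := by rw [← hv, mul_assoc, Units.mul_inv, mul_one]
          _ = 0 := by rw [this, zero_mul]
    -- some term f i * c i is a unit
    have : ∃ i, IsUnit (f i * c i) := by
      by_contra hno
      push_neg at hno
      have : s ∈ IsLocalRing.maximalIdeal B :=
        Ideal.sum_mem _ fun i _ => (IsLocalRing.mem_maximalIdeal _).mpr
          (mem_nonunits_iff.mpr (hno i))
      exact mem_nonunits_iff.mp ((IsLocalRing.mem_maximalIdeal _).mp this) hsu
    obtain ⟨i, hi⟩ := this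
    have hci : IsUnit (c i) := isUnit_of_mul_isUnit_right hi
    obtain ⟨u, hu⟩ := hci
    refine ⟨a i, u⁻¹, ?_⟩
    rw [hcc i, mul_assoc, ← hu, Units.mul_inv, mul_one]
  tfae_finish
end

section
/- Let (A, m_A) be a Noetherian local ring with m_A-adic completion Â, and let P be a prime ideal of Â. Denote by Ā the image of A under the composition A → Â → Â/P. Then: (1) P is maximal among the prime ideals of Â lying over the zero ideal of A/(P ∩ A) (i.e. P is maximal in the generic fiber of the completion map) if and only if for every element ā ∈ Â/P there exists a nonzero element b̄ ∈ Â/P with ā·b̄ ∈ Ā; (2) if in addition dim(Â/P) = 1, then b̄ can be chosen invertible, i.e. the induced homomorphism A → Â/P is Weierstrass. -/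
section AuxWeierstrass

open AdicCompletion IsLocalRing


variable {R : Type*} [CommRing R] (I : Ideal R)

/-- Elements of the adic completion whose `n`-th component vanishes lie in the `n`-th power
of the extension of `I`. -/
lemma AdicCompletionAuxPriv.mem_pow_map_of_val_eq_zero [IsNoetherianRing R] {n : ℕ}
    {x : AdicCompletion I R} (hx : x.val n = 0) :
    x ∈ (I.map (algebraMap R (AdicCompletion I R))) ^ n := by
  obtain ⟨c, rfl⟩ := AdicCompletion.mk_surjective I R x
  set N : Submodule R R := I ^ n • ⊤ with hN
  have hcn : c.val n ∈ N := (Submodule.Quotient.mk_eq_zero N).mp hx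
  have hexact := AdicCompletion.map_exact (I := I) (Submodule.injective_subtype N)
    (LinearMap.exact_subtype_mkQ N) (Submodule.mkQ_surjective N)
  have hgx : AdicCompletion.map I N.mkQ (AdicCompletion.mk I R c) = 0 := by
    ext k
    rw [AdicCompletion.map_mk]
    show Submodule.mkQ _ (N.mkQ (c.val k)) = 0
    rw [Submodule.mkQ_apply, Submodule.Quotient.mk_eq_zero]
    rcases le_total k n with hkn | hnk
    · have h1 : c.val k - c.val n ∈ (I ^ k • ⊤ : Submodule R R) :=
        (SModEq.sub_mem).mp (c.property hkn)
      have h2 : c.val k ∈ (I ^ k • ⊤ : Submodule R R) := by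
        have := Submodule.smul_mono_left (Ideal.pow_le_pow_right hkn) hcn
        simpa using add_mem h1 this
      have := Submodule.mem_map_of_mem (f := N.mkQ) h2
      rw [Submodule.map_smul''] at this
      exact Submodule.smul_mono le_rfl le_top this
    · have h1 : c.val n - c.val k ∈ (I ^ n • ⊤ : Submodule R R) :=
        (SModEq.sub_mem).mp (c.property hnk)
      have h2 : c.val k ∈ N := by
        simpa using sub_mem hcn h1
      have : N.mkQ (c.val k) = 0 := by
        rw [Submodule.mkQ_apply, Submodule.Quotient.mk_eq_zero]; exact h2
      rw [this]; exact zero_mem _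
  obtain ⟨y, hy⟩ := (hexact _).mp hgx
  haveI : Module.Finite R ↥N := Module.Finite.iff_fg.mpr (IsNoetherian.noetherian N)
  obtain ⟨t, rfl⟩ :=
    (AdicCompletion.ofTensorProduct_bijective_of_finite_of_isNoetherian I ↥N).surjective y
  rw [← hy]
  clear hy hgx
  induction t with
  | zero => rw [_root_.map_zero, _root_.map_zero]; exact zero_mem _
  | add a b ha hb => rw [_root_.map_add, _root_.map_add]; exact add_mem ha hb
  | tmul b m =>
      rw [AdicCompletion.ofTensorProduct_tmul, map_smul]
      have h1 : AdicCompletion.map I N.subtype (AdicCompletion.of I ↥N m)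
          = AdicCompletion.of I R (m : R) := by
        ext k
        rw [AdicCompletion.map_val_apply]
        show (N.subtype.reduceModIdeal (I ^ k)) (Submodule.Quotient.mk m) = _
        rw [LinearMap.reduceModIdeal_apply]
        rfl
      rw [h1]
      have h2 : AdicCompletion.of I R (m : R) = algebraMap R (AdicCompletion I R) (m : R) := rfl
      have h3 : (m : R) ∈ I ^ n := by simpa [hN] using m.2
      have h4 : algebraMap R (AdicCompletion I R) (m : R)
          ∈ (I.map (algebraMap R (AdicCompletion I R))) ^ n := by
        rw [← Ideal.map_pow]
        exact Ideal.mem_map_of_mem _ h3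
      rw [h2]
      show b * algebraMap R (AdicCompletion I R) (m : R) ∈ _
      exact Ideal.mul_mem_left _ b h4

/-- Density of `R` in its adic completion. -/
lemma AdicCompletionAuxPriv.exists_sub_mem_pow [IsNoetherianRing R]
    (x : AdicCompletion I R) (n : ℕ) :
    ∃ a : R, x - algebraMap R (AdicCompletion I R) a
      ∈ (I.map (algebraMap R (AdicCompletion I R))) ^ n := by
  obtain ⟨c, rfl⟩ := AdicCompletion.mk_surjective I R x
  refine ⟨c.val n, AdicCompletionAuxPriv.mem_pow_map_of_val_eq_zero I ?_⟩
  rw [AdicCompletion.val_sub_apply]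
  show Submodule.mkQ (I ^ n • ⊤ : Submodule R R) (c.val n) - Submodule.mkQ (I ^ n • ⊤ : Submodule R R) (c.val n) = 0
  rw [sub_self]


variable {A : Type*} [CommRing A] [IsLocalRing A]

lemma AdicCompletionAuxPriv.isLocalRing :
    IsLocalRing (AdicCompletion (maximalIdeal A) A) := by
  set I : Ideal A := maximalIdeal A
  have hItop : (I ^ 1 • ⊤ : Ideal A) ≠ ⊤ := by
    simpa [Ideal.smul_eq_mul, Ideal.mul_top] using maximalIdeal.isMaximal A |>.ne_top
  haveI : Nontrivial (A ⧸ (I ^ 1 • ⊤ : Ideal A)) := Ideal.Quotient.nontrivial_iff.mpr hItop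
  haveI : Nontrivial (AdicCompletion I A) := by
    refine ⟨1, 0, fun h => ?_⟩
    have h1 : (1 : A ⧸ (I ^ 1 • ⊤ : Submodule A A)) = 0 := by
      simpa using congrArg (fun x : AdicCompletion I A => x.val 1) h
    have h2 : (1 : A) ∈ (I ^ 1 • ⊤ : Submodule A A) := by
      rwa [show (1 : A ⧸ (I ^ 1 • ⊤ : Submodule A A)) = Submodule.Quotient.mk 1 from rfl,
        Submodule.Quotient.mk_eq_zero] at h1
    exact hItop ((Ideal.eq_top_iff_one _).mpr h2)
  have key : ∀ x : AdicCompletion I A, x.val 1 ≠ 0 → IsUnit x := by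
    intro x hx1
    have hu : ∀ k, IsUnit (x.val k) := by
      intro k
      rcases Nat.eq_zero_or_pos k with rfl | hk
      · haveI : Subsingleton (A ⧸ (I ^ 0 • ⊤ : Submodule A A)) := by
          rw [Submodule.Quotient.subsingleton_iff]
          simp
        exact isUnit_of_subsingleton _
      · by_contra hnu
        obtain ⟨a, ha⟩ := Submodule.mkQ_surjective _ (x.val k)
        have hanu : ¬IsUnit a := fun h => hnu (ha ▸ h.map (Ideal.Quotient.mk _))
        have haI : a ∈ I := hanu
        have hxa : x.val 1 = Submodule.mkQ (I ^ 1 • ⊤ : Submodule A A) a := by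
          rw [← x.property hk, ← ha, Submodule.mkQ_apply, Submodule.mkQ_apply]
          rfl
        apply hx1
        rw [hxa, Submodule.mkQ_apply, Submodule.Quotient.mk_eq_zero]
        simpa using haI
    set inv : ∀ k, A ⧸ (I ^ k • ⊤ : Submodule A A) := fun k => ((hu k).unit⁻¹ : _)
    have hinvmul : ∀ k, x.val k * inv k = 1 := fun k => (hu k).mul_val_inv
    have compat : ∀ {m k : ℕ} (hmk : m ≤ k),
        AdicCompletion.transitionMap I A hmk (inv k) = inv m := by
      intro m k hmk
      have h1 : AdicCompletion.transitionMap I A hmk ((x.val k) * inv k)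
          = x.val m * AdicCompletion.transitionMap I A hmk (inv k) := by
        rw [AdicCompletion.transitionMap_map_mul, x.property hmk]
      have h2 : x.val m * AdicCompletion.transitionMap I A hmk (inv k) = 1 := by
        rw [← h1, hinvmul, AdicCompletion.transitionMap_map_one]
      calc AdicCompletion.transitionMap I A hmk (inv k)
          = (x.val m * inv m) * AdicCompletion.transitionMap I A hmk (inv k) := by
            rw [hinvmul m, one_mul]
        _ = inv m * (x.val m * AdicCompletion.transitionMap I A hmk (inv k)) := by ring
        _ = inv m := by rw [h2, mul_one]
    set y : AdicCompletion I A := ⟨inv, compat⟩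
    refine IsUnit.of_mul_eq_one y ?_
    ext k
    rw [AdicCompletion.val_mul, AdicCompletion.val_one]
    exact hinvmul k
  apply IsLocalRing.of_isUnit_or_isUnit_one_sub_self
  intro x
  by_cases h : x.val 1 = 0
  · right
    apply key
    rw [AdicCompletion.val_sub_apply, h, AdicCompletion.val_one, sub_zero]
    exact one_ne_zero
  · exact Or.inl (key x h)

lemma AdicCompletionAuxPriv.map_le_maximalIdeal :
    haveI := AdicCompletionAuxPriv.isLocalRing (A := A)
    (maximalIdeal A).map (algebraMap A (AdicCompletion (maximalIdeal A) A))
      ≤ maximalIdeal (AdicCompletion (maximalIdeal A) A) := by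
  haveI := AdicCompletionAuxPriv.isLocalRing (A := A)
  set I : Ideal A := maximalIdeal A
  have hI1 : (I ^ 1 : Ideal A) ≠ ⊤ := by
    simpa using maximalIdeal.isMaximal A |>.ne_top
  haveI : Nontrivial (A ⧸ (I ^ 1 : Ideal A)) := Ideal.Quotient.nontrivial_iff.mpr hI1
  apply IsLocalRing.le_maximalIdeal
  intro htop
  have hker : I.map (algebraMap A (AdicCompletion I A))
      ≤ RingHom.ker (AdicCompletion.evalₐ I 1) := by
    rw [Ideal.map_le_iff_le_comap]
    intro i hi
    show AdicCompletion.evalₐ I 1 (algebraMap A (AdicCompletion I A) i) ∈ (⊥ : Ideal _)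
    rw [AlgHom.commutes]
    show Ideal.Quotient.mk (I ^ 1) i ∈ (⊥ : Ideal _)
    rw [Ideal.mem_bot, Ideal.Quotient.eq_zero_iff_mem]
    simpa using hi
  rw [htop] at hker
  exact (RingHom.ker_ne_top (AdicCompletion.evalₐ I 1).toRingHom) (top_le_iff.mp hker)

end AuxWeierstrass

open AdicCompletion IsLocalRing

set_option maxHeartbeats 1000000 in
set_option synthInstance.maxHeartbeats 1000000 in
/-- Proposition 4.7: let `(A, m_A)` be a Noetherian local ring with `m_A`-adic completion `Â`
and let `P` be a prime of `Â`. Then (1) `P` is maximal in the generic fiber of `A → Â`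
(i.e. maximal among primes of `Â` with the same contraction to `A`) iff every `ā ∈ Â/P`
admits `b̄ ≠ 0` in `Â/P` with `ā·b̄` in the image `Ā` of `A`; and (2) if moreover
`dim Â/P = 1`, then `b̄` can be chosen invertible, i.e. `A → Â/P` is Weierstrass. -/

theorem maximal_in_generic_fiber_iff_and_weierstrass {A : Type*} [CommRing A]
    [IsNoetherianRing A] [IsLocalRing A]
    (P : Ideal (AdicCompletion (IsLocalRing.maximalIdeal A) A)) [P.IsPrime] :
    ((∀ Q : Ideal (AdicCompletion (IsLocalRing.maximalIdeal A) A), Q.IsPrime →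
        Q.comap (algebraMap A (AdicCompletion (IsLocalRing.maximalIdeal A) A)) =
          P.comap (algebraMap A (AdicCompletion (IsLocalRing.maximalIdeal A) A)) →
        P ≤ Q → P = Q) ↔
      (∀ a : AdicCompletion (IsLocalRing.maximalIdeal A) A ⧸ P,
        ∃ b : AdicCompletion (IsLocalRing.maximalIdeal A) A ⧸ P, b ≠ 0 ∧
          a * b ∈ ((Ideal.Quotient.mk P).comp
            (algebraMap A (AdicCompletion (IsLocalRing.maximalIdeal A) A))).range)) ∧
    ((∀ Q : Ideal (AdicCompletion (IsLocalRing.maximalIdeal A) A), Q.IsPrime →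
        Q.comap (algebraMap A (AdicCompletion (IsLocalRing.maximalIdeal A) A)) =
          P.comap (algebraMap A (AdicCompletion (IsLocalRing.maximalIdeal A) A)) →
        P ≤ Q → P = Q) →
      ringKrullDim (AdicCompletion (IsLocalRing.maximalIdeal A) A ⧸ P) = 1 →
      ((Ideal.Quotient.mk P).comp
        (algebraMap A (AdicCompletion (IsLocalRing.maximalIdeal A) A))).IsWeierstrass) := by
  set R := AdicCompletion (IsLocalRing.maximalIdeal A) A with hR
  set alg := algebraMap A R with halg
  set π := Ideal.Quotient.mk P with hπ
  set φ := π.comp alg with hφ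
  haveI hdom : IsDomain (R ⧸ P) := Ideal.Quotient.isDomain P
  haveI hnt : Nontrivial (R ⧸ P) := hdom.toNontrivial
  constructor
  · constructor
    · -- maximality → divisibility
      intro hmax b
      by_cases hb : b = 0
      · exact ⟨1, one_ne_zero, ⟨0, by simp [hb]⟩⟩
      by_contra hcon
      push_neg at hcon
      -- the submonoid of nonzero elements of the image of φ
      set S : Submonoid (R ⧸ P) :=
        { carrier := {x | x ≠ 0 ∧ x ∈ Set.range φ}
          mul_mem' := fun {x y} hx hy =>
            ⟨mul_ne_zero hx.1 hy.1, by
              obtain ⟨u, hu⟩ := hx.2; obtain ⟨v, hv⟩ := hy.2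
              exact ⟨u * v, by rw [map_mul, hu, hv]⟩⟩
          one_mem' := ⟨one_ne_zero, ⟨1, map_one φ⟩⟩ } with hS
      have hdisj : Disjoint ((Ideal.span {b} : Ideal (R ⧸ P)) : Set (R ⧸ P)) (S : Set (R ⧸ P)) := by
        rw [Set.disjoint_left]
        rintro x hx ⟨hx0, a, ha⟩
        obtain ⟨c, hc⟩ := Ideal.mem_span_singleton'.mp hx
        have hc0 : c ≠ 0 := fun h => hx0 (by rw [← hc, h, zero_mul])
        exact hcon c hc0 ⟨a, by rw [ha, ← hc, mul_comm]⟩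
      obtain ⟨q, hq, hle, hdisj2⟩ := Ideal.exists_le_prime_disjoint _ S hdisj
      haveI := hq
      set Q : Ideal R := q.comap π with hQ
      haveI : Q.IsPrime := Ideal.IsPrime.comap π
      have hPQ : P ≤ Q := fun x hx => by
        show Ideal.Quotient.mk P x ∈ q
        rw [Ideal.Quotient.eq_zero_iff_mem.mpr hx]
        exact q.zero_mem
      have hcomap : Q.comap alg = P.comap alg := by
        ext a
        simp only [Ideal.mem_comap]
        constructor
        · intro h
          have hq' : φ a ∈ q := h
          by_contra hnP
          have hne : φ a ≠ 0 := fun h0 => hnP (Ideal.Quotient.eq_zero_iff_mem.mp h0)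
          exact Set.disjoint_left.mp hdisj2 hq' ⟨hne, ⟨a, rfl⟩⟩
        · intro h
          have : φ a = 0 := Ideal.Quotient.eq_zero_iff_mem.mpr h
          show φ a ∈ q
          rw [this]; exact q.zero_mem
      have hPQ' := hmax Q inferInstance hcomap hPQ
      obtain ⟨x, rfl⟩ := Ideal.Quotient.mk_surjective b
      have hxQ : x ∈ Q := by
        show Ideal.Quotient.mk P x ∈ q
        exact hle (Ideal.mem_span_singleton_self _)
      rw [← hPQ'] at hxQ
      exact hb (Ideal.Quotient.eq_zero_iff_mem.mpr hxQ)
    · -- divisibility → maximality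
      intro hdiv Q hQprime hcomap hPQ
      refine le_antisymm hPQ fun x hxQ => ?_
      obtain ⟨c, hc0, a, ha⟩ := hdiv (π x)
      obtain ⟨y, rfl⟩ := Ideal.Quotient.mk_surjective c
      have hmem : alg a - x * y ∈ P := by
        rw [← Ideal.Quotient.eq (I := P), map_mul]
        exact ha
      have halgQ : alg a ∈ Q := by
        have h1 : x * y ∈ Q := Q.mul_mem_right y hxQ
        have h2 : alg a - x * y ∈ Q := hPQ hmem
        simpa using add_mem h2 h1
      have haP : alg a ∈ P := by
        have : a ∈ Q.comap alg := halgQ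
        rw [hcomap] at this
        exact this
      have hphi : φ a = 0 := Ideal.Quotient.eq_zero_iff_mem.mpr haP
      have hzero : Ideal.Quotient.mk P x * Ideal.Quotient.mk P y = 0 := ha ▸ hphi
      rcases mul_eq_zero.mp hzero with h | h
      · rwa [Ideal.Quotient.eq_zero_iff_mem] at h
      · exact absurd h hc0
  · -- Weierstrass part
    intro _ hdim b
    haveI : IsLocalRing R := AdicCompletionAuxPriv.isLocalRing
    haveI : IsLocalRing (R ⧸ P) := IsLocalRing.of_surjective' π Ideal.Quotient.mk_surjective
    by_cases hb0 : b = 0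
    · exact ⟨0, 1, by simp [hb0]⟩
    by_cases hbu : IsUnit b
    · exact ⟨1, hbu.unit, by rw [map_one, one_mul, IsUnit.unit_spec]⟩
    set J : Ideal (R ⧸ P) := (maximalIdeal A).map φ with hJ
    have hJm : J ≤ maximalIdeal (R ⧸ P) := by
      rw [hJ, Ideal.map_le_iff_le_comap]
      intro i hi
      show φ i ∈ maximalIdeal (R ⧸ P)
      rw [IsLocalRing.mem_maximalIdeal]
      intro hun
      have halgi : alg i ∈ maximalIdeal R :=
        AdicCompletionAuxPriv.map_le_maximalIdeal (Ideal.mem_map_of_mem alg hi)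
      obtain ⟨w, hw⟩ := hun.exists_right_inv
      obtain ⟨v, rfl⟩ := Ideal.Quotient.mk_surjective w
      have : alg i * v - 1 ∈ P := by
        rw [← Ideal.Quotient.eq_zero_iff_mem, map_sub, map_one, sub_eq_zero, map_mul]
        exact hw
      have hP : alg i * v - 1 ∈ maximalIdeal R :=
        IsLocalRing.le_maximalIdeal (Ideal.IsPrime.ne_top ‹P.IsPrime›) this
      have hunit : IsUnit (alg i * v) := by
        have : IsUnit (1 - (-(alg i * v - 1))) :=
          IsLocalRing.isUnit_one_sub_self_of_mem_nonunits _ (neg_mem hP)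
        simpa using this
      exact (IsLocalRing.mem_maximalIdeal _).mp halgi (isUnit_of_mul_isUnit_left hunit)
    have hdense : ∀ (x : R ⧸ P) (n : ℕ), ∃ a : A, x - φ a ∈ J ^ n := by
      intro x n
      obtain ⟨z, rfl⟩ := Ideal.Quotient.mk_surjective x
      obtain ⟨a, ha⟩ := AdicCompletionAuxPriv.exists_sub_mem_pow (IsLocalRing.maximalIdeal A) z n
      refine ⟨a, ?_⟩
      have h1 := Ideal.mem_map_of_mem π ha
      rw [Ideal.map_pow, Ideal.map_map] at h1
      have h2 : π (z - alg a) = π z - φ a := by rw [map_sub]; rfl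
      rw [h2] at h1
      exact h1
    -- b is a nonzero nonunit
    have hbm : b ∈ maximalIdeal (R ⧸ P) := hbu
    have hrad : J ≤ (Ideal.span {b}).radical := by
      rw [Ideal.radical_eq_sInf]
      refine le_sInf ?_
      rintro q ⟨hbq, hq⟩
      by_contra hJq
      obtain ⟨j, hjJ, hjq⟩ := SetLike.not_le_iff_exists.mp hJq
      have hqm : q ≠ maximalIdeal (R ⧸ P) := fun h => hjq (h ▸ hJm hjJ)
      have hq_le : q ≤ maximalIdeal (R ⧸ P) := IsLocalRing.le_maximalIdeal hq.ne_top
      have hbq' : b ∈ q := hbq (Ideal.mem_span_singleton_self b)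
      have hq0 : q ≠ ⊥ := fun h => hb0 (by simpa [h] using hbq')
      -- build a chain of primes of length 2
      let p0 : PrimeSpectrum (R ⧸ P) := ⟨⊥, Ideal.bot_prime⟩
      let p1 : PrimeSpectrum (R ⧸ P) := ⟨q, hq⟩
      let p2 : PrimeSpectrum (R ⧸ P) :=
        ⟨maximalIdeal (R ⧸ P), (IsLocalRing.maximalIdeal.isMaximal _).isPrime⟩
      have h01 : p0 < p1 := by
        rw [← PrimeSpectrum.asIdeal_lt_asIdeal]
        exact lt_of_le_of_ne bot_le (Ne.symm hq0)
      have h12 : p1 < p2 := by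
        rw [← PrimeSpectrum.asIdeal_lt_asIdeal]
        exact lt_of_le_of_ne hq_le hqm
      let chain : LTSeries (PrimeSpectrum (R ⧸ P)) :=
        ((RelSeries.singleton _ p0).snoc p1 h01).snoc p2 (by exact h12)
      have hlen := Order.LTSeries.length_le_krullDim chain
      have hlen2 : chain.length = 2 := rfl
      rw [hlen2] at hlen
      rw [show ringKrullDim (R ⧸ P) = Order.krullDim (PrimeSpectrum (R ⧸ P)) from rfl] at hdim
      rw [hdim] at hlen
      norm_num at hlen
    have hfg : J.FG := Ideal.FG.map (IsNoetherian.noetherian _) φ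
    obtain ⟨N, hN⟩ := Ideal.exists_pow_le_of_le_radical_of_fg hrad hfg
    obtain ⟨a, ha⟩ := hdense b (N + 1)
    have hmem : b - φ a ∈ Ideal.span {b} * J := by
      have hle : J ^ (N + 1) ≤ Ideal.span {b} * J := by
        rw [pow_succ]
        exact Ideal.mul_mono_left hN
      exact hle ha
    obtain ⟨m, hmJ, hm⟩ := Ideal.mem_span_singleton_mul.mp hmem
    have hunit : IsUnit (1 - m) :=
      IsLocalRing.isUnit_one_sub_self_of_mem_nonunits m (hJm hmJ)
    refine ⟨a, hunit.unit⁻¹, ?_⟩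
    rw [Units.eq_mul_inv_iff_mul_eq, IsUnit.unit_spec]
    rw [mul_sub, mul_one, hm]
    ring
end
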